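/- Let E be a row-finite directed graph with no sources. If no cycle of E has an entrance and every pair of vertices has only finitely many cycle-free minimal ancestry pairs, then for any vertices v, w, the set {(x,y) ∈ E^∞ × E^∞ : r(x)=v, r(y)=w, σ^p x = σ^q y for some p,q ∈ ℕ} is a finite union of sets of the form {(λz, μz) : z ∈ E^∞, r(z)=s(λ)} with (λ,μ) ranging over cycle-free minimal ancestry pairs for v,w. -/

import Mathlib

/-- A directed graph: edges `E`, vertices `V`, range and source maps. -/
structure DirGraph where
  V : Type
  E : Type
  r : E → V
  s : E → V

/-- Shift an infinite path (sequence of edges) by `p`. -/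
def shift (p : ℕ) {α : Type} (x : ℕ → α) : ℕ → α := fun i => x (i + p)

namespace DirGraph

variable (G : DirGraph)

/-- `IsPath G v l u` : the list of edges `l` is a finite path with range `v` and
source `u` (edges are composed so that `s eᵢ = r eᵢ₊₁`). -/
inductive IsPath : G.V → List G.E → G.V → Prop
  | nil (v : G.V) : IsPath v [] v
  | cons (e : G.E) {l : List G.E} {u : G.V} :
      IsPath (G.s e) l u → IsPath (G.r e) (e :: l) u

/-- An infinite path: a sequence of edges with `s(xᵢ) = r(xᵢ₊₁)`. -/
def InfPath (x : ℕ → G.E) : Prop := ∀ i, G.s (x i) = G.r (x (i + 1))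

/-- Prepend a finite path (list of edges) to an infinite path. -/
def prepend (l : List G.E) (x : ℕ → G.E) : ℕ → G.E :=
  fun i => if h : i < l.length then l.get ⟨i, h⟩ else x (i - l.length)

/-- A cycle: a nonempty finite path with equal range and source. -/
def IsCycle (c : List G.E) : Prop := c ≠ [] ∧ ∃ u, G.IsPath u c u

/-- A finite path contains a cycle if some (contiguous) subpath is a cycle. -/
def ContainsCycle (l : List G.E) : Prop :=
  ∃ p c q, l = p ++ c ++ q ∧ G.IsCycle c

/-- A simple cycle: a cycle containing no other cycle as a proper subpath. -/
def IsSimpleCycle (c : List G.E) : Prop :=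
  G.IsCycle c ∧ ∀ p c' q, c = p ++ c' ++ q → G.IsCycle c' → c' = c

/-- A pair of finite paths is minimal if no nontrivial common final segment
can be factored out. -/
def Minimal (a b : List G.E) : Prop :=
  ∀ a' b' n, a = a' ++ n → b = b' ++ n → n = []

/-- No cycle of `G` has an entrance: for every edge `f` on a cycle, `f` is the
only edge with range `r f`. -/
def NoCycleHasEntrance : Prop :=
  ∀ u c, G.IsCycle c → G.IsPath u c u → ∀ f ∈ c, ∀ e, G.r e = G.r f → e = f

/-- Row-finite: every vertex receives only finitely many edges. -/
def RowFinite : Prop := ∀ v, {e : G.E | G.r e = v}.Finite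

/-- No sources: every vertex receives an edge. -/
def NoSources : Prop := ∀ v : G.V, ∃ e, G.r e = v

/-- Minimal cycle-free ancestry pair for the vertices `v, w`. -/
def MCFPair (v w : G.V) (a b : List G.E) : Prop :=
  (∃ u, G.IsPath v a u ∧ G.IsPath w b u) ∧ G.Minimal a b ∧
    ¬G.ContainsCycle a ∧ ¬G.ContainsCycle b

end DirGraph

/-- The image `π_R(Z(a,b))` in `E^∞ × E^∞` of the cylinder set of an ancestry
pair `(a,b)` for the vertices `v, w`. -/
def DirGraph.PairSet (G : DirGraph) (v w : G.V) (a b : List G.E) :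
    Set ((ℕ → G.E) × (ℕ → G.E)) :=
  {t | ∃ (u : G.V) (z : ℕ → G.E), G.InfPath z ∧ G.r (z 0) = u ∧
    G.IsPath v a u ∧ G.IsPath w b u ∧ t = (G.prepend a z, G.prepend b z)}

/-!
If `σ^p x = σ^q y = z`, then `(x, y) = (λz, μz)` for the ancestry pair `(λ, μ)` formed by the first
`p` edges of `x` and the first `q` edges of `y`. This pair can be reduced to a cycle-free minimal one
without changing `(λz, μz)`: a common final segment is absorbed into `z`, and a cycle `c` inside `λ`
(or `μ`) can be cut out because, when no cycle has an entrance, the only infinite path starting at the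
base of `c` is `ccc⋯`, so that `c t = t` for every infinite path `t` with `r(t) = r(c)`.
-/

namespace DirGraph

variable {G : DirGraph}

theorem prepend_nil (x : ℕ → G.E) : G.prepend [] x = x := by
  funext i
  simp [prepend]

theorem prepend_cons_zero (e : G.E) (l : List G.E) (x : ℕ → G.E) :
    G.prepend (e :: l) x 0 = e := by
  simp [prepend]

theorem prepend_cons_succ (e : G.E) (l : List G.E) (x : ℕ → G.E) (i : ℕ) :
    G.prepend (e :: l) x (i + 1) = G.prepend l x i := by
  simp [prepend]

theorem prepend_append (l₁ l₂ : List G.E) (x : ℕ → G.E) :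
    G.prepend (l₁ ++ l₂) x = G.prepend l₁ (G.prepend l₂ x) := by
  induction l₁ with
  | nil => rw [List.nil_append, prepend_nil]
  | cons e l ih =>
    funext i
    cases i with
    | zero => rw [List.cons_append, prepend_cons_zero, prepend_cons_zero]
    | succ j => rw [List.cons_append, prepend_cons_succ, prepend_cons_succ, ih]

theorem shift_prepend (l : List G.E) (z : ℕ → G.E) : shift l.length (G.prepend l z) = z := by
  funext i
  simp [shift, prepend]

theorem prepend_ofFn_shift (x : ℕ → G.E) (p : ℕ) :
    G.prepend (List.ofFn fun i : Fin p => x i) (shift p x) = x := by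
  funext i
  by_cases h : i < p
  · simp [prepend, h]
  · simp [prepend, shift, h, Nat.sub_add_cancel (not_lt.mp h)]

theorem isPath_append {v u : G.V} {l₁ l₂ : List G.E} :
    G.IsPath v (l₁ ++ l₂) u ↔ ∃ m, G.IsPath v l₁ m ∧ G.IsPath m l₂ u := by
  induction l₁ generalizing v with
  | nil =>
    refine ⟨fun h => ⟨v, .nil v, h⟩, ?_⟩
    rintro ⟨m, ⟨⟩, h⟩
    exact h
  | cons e l ih =>
    constructor
    · rintro (_ | ⟨_, h⟩)
      obtain ⟨m, h₁, h₂⟩ := ih.mp h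
      exact ⟨m, .cons e h₁, h₂⟩
    · rintro ⟨m, _ | ⟨_, h₁⟩, h₂⟩
      exact .cons e (ih.mpr ⟨m, h₁, h₂⟩)

theorem isPath_cons_iff {v u : G.V} {e : G.E} {l : List G.E} :
    G.IsPath v (e :: l) u ↔ v = G.r e ∧ G.IsPath (G.s e) l u := by
  constructor
  · rintro (_ | ⟨_, h⟩)
    exact ⟨rfl, h⟩
  · rintro ⟨rfl, h⟩
    exact .cons e h

theorem IsPath.range_unique {v v' u u' : G.V} {l : List G.E} (h : G.IsPath v l u)
    (h' : G.IsPath v' l u') (hl : l ≠ []) : v = v' := by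
  obtain ⟨e, l, rfl⟩ := List.exists_cons_of_ne_nil hl
  exact (isPath_cons_iff.mp h).1.trans (isPath_cons_iff.mp h').1.symm

theorem IsPath.source_unique {v u u' : G.V} {l : List G.E} (h : G.IsPath v l u)
    (h' : G.IsPath v l u') : u = u' := by
  induction h with
  | nil => cases h'; rfl
  | cons e _ ih => exact ih (isPath_cons_iff.mp h').2

theorem infPath_shift {x : ℕ → G.E} (hx : G.InfPath x) (p : ℕ) : G.InfPath (shift p x) := by
  intro i
  simpa [shift, Nat.add_right_comm] using hx (i + p)

theorem InfPath.isPath_ofFn {x : ℕ → G.E} (hx : G.InfPath x) (p : ℕ) :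
    G.IsPath (G.r (x 0)) (List.ofFn fun i : Fin p => x i) (G.r (x p)) := by
  induction p generalizing x with
  | zero => exact .nil _
  | succ n ih =>
    rw [List.ofFn_succ]
    have htail := ih (infPath_shift hx 1)
    simp only [shift, Nat.zero_add, ← hx 0] at htail
    exact .cons (x 0) htail

theorem IsPath.r_prepend_zero {v u : G.V} {l : List G.E} (h : G.IsPath v l u) {z : ℕ → G.E}
    (hz0 : G.r (z 0) = u) : G.r (G.prepend l z 0) = v := by
  cases h with
  | nil => rwa [prepend_nil]
  | cons e _ => rw [prepend_cons_zero]

theorem IsPath.infPath_prepend {v u : G.V} {l : List G.E} (h : G.IsPath v l u) {z : ℕ → G.E}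
    (hz : G.InfPath z) (hz0 : G.r (z 0) = u) : G.InfPath (G.prepend l z) := by
  induction h with
  | nil => rwa [prepend_nil]
  | cons e h ih =>
    rintro (_ | i)
    · rw [prepend_cons_zero, prepend_cons_succ, h.r_prepend_zero hz0]
    · rw [prepend_cons_succ, prepend_cons_succ]
      exact ih hz0 i

theorem IsPath.infPath_follows {v u : G.V} {l : List G.E}
    (hl : ∀ f ∈ l, ∀ e, G.r e = G.r f → e = f) (h : G.IsPath v l u) {t : ℕ → G.E}
    (ht : G.InfPath t) (h0 : G.r (t 0) = v) :
    (∀ i (hi : i < l.length), t i = l[i]) ∧ G.r (t l.length) = u := by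
  induction h generalizing t with
  | nil => exact ⟨fun i hi => absurd hi (Nat.not_lt_zero i), h0⟩
  | cons e _ ih =>
    have he : t 0 = e := hl e List.mem_cons_self _ h0
    obtain ⟨hget, hend⟩ := ih (fun f hf => hl f (List.mem_cons_of_mem e hf)) (infPath_shift ht 1)
      (by simp [shift, ← ht 0, he])
    refine ⟨?_, hend⟩
    rintro (_ | i) hi
    · exact he
    · exact hget i (by simpa using hi)

theorem NoCycleHasEntrance.infPath_unique (hnc : G.NoCycleHasEntrance) {u : G.V} {c : List G.E}
    (hne : c ≠ []) (hc : G.IsPath u c u) {t t' : ℕ → G.E} (ht : G.InfPath t)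
    (h0 : G.r (t 0) = u) (ht' : G.InfPath t') (h0' : G.r (t' 0) = u) : t = t' := by
  have follows {t : ℕ → G.E} (ht : G.InfPath t) (h0 : G.r (t 0) = u) :=
    hc.infPath_follows (hnc u c ⟨hne, u, hc⟩ hc) ht h0
  have hlen : 0 < c.length := List.length_pos_iff.mpr hne
  funext i
  induction i using Nat.strong_induction_on generalizing t t' with
  | _ i ih =>
    by_cases hi : i < c.length
    · rw [(follows ht h0).1 i hi, (follows ht' h0').1 i hi]
    · obtain ⟨j, rfl⟩ : ∃ j, i = j + c.length := ⟨i - c.length, by omega⟩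
      exact ih j (by omega) (infPath_shift ht _) (by simpa [shift] using (follows ht h0).2)
        (infPath_shift ht' _) (by simpa [shift] using (follows ht' h0').2)

theorem NoCycleHasEntrance.prepend_cycle (hnc : G.NoCycleHasEntrance) {u : G.V} {c : List G.E}
    (hne : c ≠ []) (hc : G.IsPath u c u) {t : ℕ → G.E} (ht : G.InfPath t)
    (h0 : G.r (t 0) = u) : G.prepend c t = t :=
  hnc.infPath_unique hne hc (hc.infPath_prepend ht h0) (hc.r_prepend_zero h0) ht h0

theorem NoCycleHasEntrance.exists_shorter_of_containsCycle (hnc : G.NoCycleHasEntrance)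
    {v u : G.V} {a : List G.E} (ha : G.ContainsCycle a) (hpath : G.IsPath v a u)
    {z : ℕ → G.E} (hz : G.InfPath z) (hz0 : G.r (z 0) = u) :
    ∃ a', a'.length < a.length ∧ G.IsPath v a' u ∧ G.prepend a' z = G.prepend a z := by
  obtain ⟨p, c, q, rfl, hne, u', hc⟩ := ha
  obtain ⟨m₂, hpc, hq⟩ := isPath_append.mp hpath
  obtain ⟨m₁, hp, hc'⟩ := isPath_append.mp hpc
  obtain rfl := hc'.range_unique hc hne
  obtain rfl := hc'.source_unique hc
  refine ⟨p ++ q, ?_, isPath_append.mpr ⟨_, hp, hq⟩, ?_⟩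
  · simp [List.length_pos_iff.mpr hne]
  · rw [prepend_append, prepend_append, prepend_append,
      hnc.prepend_cycle hne hc (hq.infPath_prepend hz hz0) (hq.r_prepend_zero hz0)]

theorem NoCycleHasEntrance.exists_mcfPair_mem_pairSet (hnc : G.NoCycleHasEntrance)
    {v w u : G.V} {a b : List G.E} (ha : G.IsPath v a u) (hb : G.IsPath w b u)
    {z : ℕ → G.E} (hz : G.InfPath z) (hz0 : G.r (z 0) = u) :
    ∃ a' b', G.MCFPair v w a' b' ∧ (G.prepend a z, G.prepend b z) ∈ G.PairSet v w a' b' := by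
  induction hN : a.length + b.length using Nat.strong_induction_on generalizing a b u z with
  | _ N ih =>
  by_cases hca : G.ContainsCycle a
  · obtain ⟨a', hlen, ha', heq⟩ := hnc.exists_shorter_of_containsCycle hca ha hz hz0
    rw [← heq]
    exact ih _ (by omega) ha' hb hz hz0 rfl
  by_cases hcb : G.ContainsCycle b
  · obtain ⟨b', hlen, hb', heq⟩ := hnc.exists_shorter_of_containsCycle hcb hb hz hz0
    rw [← heq]
    exact ih _ (by omega) ha hb' hz hz0 rfl
  by_cases hmin : G.Minimal a b
  · exact ⟨a, b, ⟨⟨u, ha, hb⟩, hmin, hca, hcb⟩, u, z, hz, hz0, ha, hb, rfl⟩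
  simp only [Minimal, not_forall] at hmin
  obtain ⟨a', b', n, rfl, rfl, hne⟩ := hmin
  obtain ⟨m, ha', hna⟩ := isPath_append.mp ha
  obtain ⟨m', hb', hnb⟩ := isPath_append.mp hb
  obtain rfl : m' = m := hnb.range_unique hna hne
  rw [prepend_append, prepend_append]
  refine ih _ ?_ ha' hb' (hna.infPath_prepend hz hz0) (hna.r_prepend_zero hz0) rfl
  simp only [List.length_append] at hN
  have := List.length_pos_iff.mpr hne
  omega

theorem NoCycleHasEntrance.exists_mcfPair_of_shift_eq (hnc : G.NoCycleHasEntrance)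
    {x y : ℕ → G.E} (hx : G.InfPath x) (hy : G.InfPath y) {p q : ℕ}
    (hpq : shift p x = shift q y) :
    ∃ a b, G.MCFPair (G.r (x 0)) (G.r (y 0)) a b ∧
      (x, y) ∈ G.PairSet (G.r (x 0)) (G.r (y 0)) a b := by
  have hxy : G.r (y q) = G.r (x p) := by
    simpa [shift] using congrArg G.r (congrFun hpq 0).symm
  have hpy := hy.isPath_ofFn q
  rw [hxy] at hpy
  have hz0 : G.r (shift p x 0) = G.r (x p) := by simp [shift]
  have := hnc.exists_mcfPair_mem_pairSet (hx.isPath_ofFn p) hpy (infPath_shift hx p) hz0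
  rwa [prepend_ofFn_shift, hpq, prepend_ofFn_shift] at this

theorem of_mem_pairSet {v w : G.V} {a b : List G.E} {x y : ℕ → G.E}
    (h : (x, y) ∈ G.PairSet v w a b) :
    G.InfPath x ∧ G.InfPath y ∧ G.r (x 0) = v ∧ G.r (y 0) = w ∧
      ∃ p q : ℕ, shift p x = shift q y := by
  obtain ⟨u, z, hz, hz0, ha, hb, heq⟩ := h
  obtain ⟨rfl, rfl⟩ := Prod.mk.inj heq
  exact ⟨ha.infPath_prepend hz hz0, hb.infPath_prepend hz hz0, ha.r_prepend_zero hz0,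
    hb.r_prepend_zero hz0, a.length, b.length, by rw [shift_prepend, shift_prepend]⟩

end DirGraph

theorem orbit_set_finite_union_general (G : DirGraph)
    (hnc : G.NoCycleHasEntrance)
    (hfa : ∀ v w : G.V, {p : List G.E × List G.E | G.MCFPair v w p.1 p.2}.Finite)
    (v w : G.V) :
    ∃ D : Set (List G.E × List G.E), D.Finite ∧
      (∀ p ∈ D, G.MCFPair v w p.1 p.2) ∧
      {t : (ℕ → G.E) × (ℕ → G.E) | G.InfPath t.1 ∧ G.InfPath t.2 ∧
          G.r (t.1 0) = v ∧ G.r (t.2 0) = w ∧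
          ∃ p q : ℕ, shift p t.1 = shift q t.2} =
        ⋃ p ∈ D, G.PairSet v w p.1 p.2 := by
  refine ⟨{p | G.MCFPair v w p.1 p.2}, hfa v w, fun _ hp => hp, ?_⟩
  ext ⟨x, y⟩
  simp only [Set.mem_ofPred_eq, Set.mem_iUnion, exists_prop, Prod.exists]
  constructor
  · rintro ⟨hx, hy, rfl, rfl, p, q, hpq⟩
    exact hnc.exists_mcfPair_of_shift_eq hx hy hpq
  · rintro ⟨a, b, -, hab⟩
    exact DirGraph.of_mem_pairSet hab

/-- If no cycle has an entrance and every pair of vertices has only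
finitely many cycle-free minimal ancestry pairs, then for all vertices `v, w`,
the set of pairs of shift-equivalent infinite paths with ranges `v, w` is a
finite union of sets `π_R(Z(λ,μ))` over cycle-free minimal ancestry pairs. -/
theorem orbit_set_finite_union (G : DirGraph)
    (hrf : G.RowFinite) (hns : G.NoSources) (hnc : G.NoCycleHasEntrance)
    (hfa : ∀ v w : G.V, {p : List G.E × List G.E | G.MCFPair v w p.1 p.2}.Finite)
    (v w : G.V) :
    ∃ D : Set (List G.E × List G.E), D.Finite ∧
      (∀ p ∈ D, G.MCFPair v w p.1 p.2) ∧
      {t : (ℕ → G.E) × (ℕ → G.E) | G.InfPath t.1 ∧ G.InfPath t.2 ∧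
          G.r (t.1 0) = v ∧ G.r (t.2 0) = w ∧
          ∃ p q : ℕ, shift p t.1 = shift q t.2} =
        ⋃ p ∈ D, G.PairSet v w p.1 p.2 :=
  orbit_set_finite_union_general G hnc hfa v w
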